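/- arXiv:2212.06915 — 3 statements merged into one kernel-verified Lean document; each statement's English description precedes it below -/
import Mathlib

section
/- Let τ_{i,0}, τ_{i,1} satisfy 1 ≥ τ_{i,0} ≥ τ_{i,1} ≥ 0 for i = 1..n with n ≥ 2. Then the restricted maximal chain score Ŝ*_{n-Chain} = sqrt(∏_{i=1}^n τ_{i,0} + ∏_{i=1}^n τ_{i,1}) is at most the unrestricted maximal chain score S*_{n-Chain} = ((τ_{1,0}² + τ_{1,1}²)(τ_{n,0}² + τ_{n,1}²))^{1/4} · ∏_{i=2}^{n−1} √(τ_{i,0}). -/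
/-! Split both products into the two end factors and the interior product `Q = ∏ τᵢ₀`; the
interior of the `τ · 1` product is at most `Q`. The end factors then combine to
`τ₁₀ τₙ₀ + τ₁₁ τₙ₁`, which Cauchy–Schwarz bounds by `√((τ₁₀² + τ₁₁²)(τₙ₀² + τₙ₁²))`, and taking
square roots turns this into the fourth root times `√Q = ∏ √τᵢ₀`. -/

open Finset

theorem prod_univ_eq_first_mul_last_mul_prod_interior {M : Type*} [CommMonoid M] {n : ℕ}
    (hn : 2 ≤ n) (f : Fin n → M) :
    ∏ i, f i = f ⟨0, Nat.zero_lt_of_lt hn⟩ * f ⟨n - 1, Nat.sub_one_lt_of_lt hn⟩ *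
      ∏ i ∈ univ.filter (fun i : Fin n => 1 ≤ (i : ℕ) ∧ (i : ℕ) < n - 1), f i := by
  set S := univ.filter (fun i : Fin n => 1 ≤ (i : ℕ) ∧ (i : ℕ) < n - 1)
  set first : Fin n := ⟨0, Nat.zero_lt_of_lt hn⟩
  set last : Fin n := ⟨n - 1, Nat.sub_one_lt_of_lt hn⟩
  have hlast : last ∉ S := by simp [S, last]
  have hfirst : first ∉ insert last S := by
    simp [S, first, last, Fin.ext_iff]
    omega
  have huniv : (univ : Finset (Fin n)) = insert first (insert last S) := by
    ext i
    simp [S, first, last, Fin.ext_iff]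
    omega
  rw [huniv, prod_insert hfirst, prod_insert hlast, mul_assoc]

theorem mul_add_mul_le_sqrt_mul_sq_add_sq (a₀ a₁ b₀ b₁ : ℝ) :
    a₀ * b₀ + a₁ * b₁ ≤ √((a₀ ^ 2 + a₁ ^ 2) * (b₀ ^ 2 + b₁ ^ 2)) :=
  (le_abs_self _).trans <|
    Real.abs_le_sqrt (by nlinarith [sq_nonneg (a₀ * b₁ - a₁ * b₀)])

theorem sqrt_sqrt_eq_rpow_one_div_four {x : ℝ} (hx : 0 ≤ x) : √(√x) = x ^ ((1 : ℝ) / 4) := by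
  rw [Real.sqrt_eq_rpow, Real.sqrt_eq_rpow, ← Real.rpow_mul hx]
  norm_num

theorem restricted_chain_score_le_unrestricted (n : ℕ) (hn : 2 ≤ n)
    (τ : Fin n → Fin 2 → ℝ)
    (h2 : ∀ i, τ i 1 ≤ τ i 0) (h3 : ∀ i, 0 ≤ τ i 1) :
    Real.sqrt (∏ i, τ i 0 + ∏ i, τ i 1) ≤
      (((τ ⟨0, by omega⟩ 0) ^ 2 + (τ ⟨0, by omega⟩ 1) ^ 2) *
          ((τ ⟨n - 1, by omega⟩ 0) ^ 2 + (τ ⟨n - 1, by omega⟩ 1) ^ 2)) ^ ((1 : ℝ) / 4) *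
        ∏ i ∈ Finset.univ.filter (fun i : Fin n => 1 ≤ (i : ℕ) ∧ (i : ℕ) < n - 1),
          Real.sqrt (τ i 0) := by
  set S := univ.filter (fun i : Fin n => 1 ≤ (i : ℕ) ∧ (i : ℕ) < n - 1)
  set a := τ ⟨0, Nat.zero_lt_of_lt hn⟩
  set b := τ ⟨n - 1, Nat.sub_one_lt_of_lt hn⟩
  have hτ0 : ∀ i, 0 ≤ τ i 0 := fun i => (h3 i).trans (h2 i)
  have hQ : 0 ≤ ∏ i ∈ S, τ i 0 := prod_nonneg fun i _ => hτ0 i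
  have hinterior : ∏ i ∈ S, τ i 1 ≤ ∏ i ∈ S, τ i 0 :=
    prod_le_prod (fun i _ => h3 i) (fun i _ => h2 i)
  have hsum : ∏ i, τ i 0 + ∏ i, τ i 1 ≤ (a 0 * b 0 + a 1 * b 1) * ∏ i ∈ S, τ i 0 := by
    rw [prod_univ_eq_first_mul_last_mul_prod_interior hn (τ · 0),
      prod_univ_eq_first_mul_last_mul_prod_interior hn (τ · 1), add_mul]
    gcongr
    exact mul_nonneg (h3 _) (h3 _)
  calc √(∏ i, τ i 0 + ∏ i, τ i 1)
      ≤ √(√((a 0 ^ 2 + a 1 ^ 2) * (b 0 ^ 2 + b 1 ^ 2)) * ∏ i ∈ S, τ i 0) :=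
        Real.sqrt_le_sqrt <| hsum.trans <|
          mul_le_mul_of_nonneg_right (mul_add_mul_le_sqrt_mul_sq_add_sq _ _ _ _) hQ
    _ = ((a 0 ^ 2 + a 1 ^ 2) * (b 0 ^ 2 + b 1 ^ 2)) ^ ((1 : ℝ) / 4) * ∏ i ∈ S, √(τ i 0) := by
        rw [Real.sqrt_mul (Real.sqrt_nonneg _), sqrt_sqrt_eq_rpow_one_div_four (by positivity),
          Real.sqrt_prod S fun i _ => hτ0 i]
end

section
/- For any n ≥ 1 and any τ_{i,0}, τ_{i,1} with 1 ≥ τ_{i,0} ≥ τ_{i,1} ≥ 0, the maximal n-local star score satisfies S*_{n-Star} = ∏_{i=1}^n (τ_{i,0}² + τ_{i,1}²)^{1/(2n)} ≤ √2, with equality iff τ_{i,0} = τ_{i,1} = 1 for all i. -/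
/-!
Each factor satisfies `τ₀² + τ₁² ≤ 2`, with equality only at `τ₀ = τ₁ = 1`, so every factor
of the product is at most `2 ^ (1 / (2n))`, and `n` copies of this bound multiply to `√2`.
A product of nonnegative factors, each bounded by `b`, reaches `b ^ n` only if every factor
equals `b`.
-/

open Finset

namespace Finset

variable {ι R : Type*} [CommSemiring R] [LinearOrder R] [IsStrictOrderedRing R]

theorem prod_eq_pow_card_iff_of_le {s : Finset ι} {f : ι → R} {b : R}
    (h0 : ∀ i ∈ s, 0 ≤ f i) (hb : ∀ i ∈ s, f i ≤ b) :
    ∏ i ∈ s, f i = b ^ #s ↔ ∀ i ∈ s, f i = b := by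
  classical
  refine ⟨fun heq => ?_, fun h => by rw [prod_congr rfl h, prod_const]⟩
  by_contra! hne
  obtain ⟨i, hi, hfi⟩ := hne
  have hlt : f i < b := (hb i hi).lt_of_ne hfi
  have hb0 : 0 < b := (h0 i hi).trans_lt hlt
  have hrest : ∏ j ∈ s.erase i, f j ≤ ∏ j ∈ s.erase i, b :=
    prod_le_prod (fun j hj => h0 j (mem_of_mem_erase hj)) fun j hj => hb j (mem_of_mem_erase hj)
  have hrest0 : 0 < ∏ j ∈ s.erase i, b := prod_pos fun _ _ => hb0
  rw [← prod_const, ← mul_prod_erase s f hi, ← mul_prod_erase s (fun _ => b) hi] at heq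
  have : f i * ∏ j ∈ s.erase i, f j < b * ∏ j ∈ s.erase i, b :=
    calc f i * ∏ j ∈ s.erase i, f j ≤ f i * ∏ j ∈ s.erase i, b :=
          mul_le_mul_of_nonneg_left hrest (h0 i hi)
      _ < b * ∏ j ∈ s.erase i, b := mul_lt_mul_of_pos_right hlt hrest0
  exact this.ne heq

end Finset

theorem sq_add_sq_le_two {x y : ℝ} (hx : x ≤ 1) (hyx : y ≤ x) (hy : 0 ≤ y) :
    x ^ 2 + y ^ 2 ≤ 2 := by
  nlinarith

theorem sq_add_sq_eq_two_iff {x y : ℝ} (hx : x ≤ 1) (hyx : y ≤ x) (hy : 0 ≤ y) :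
    x ^ 2 + y ^ 2 = 2 ↔ x = 1 ∧ y = 1 := by
  constructor
  · intro h
    constructor <;> nlinarith
  · rintro ⟨rfl, rfl⟩
    norm_num

theorem Real.rpow_one_div_two_mul_pow {x : ℝ} (hx : 0 ≤ x) {n : ℕ} (hn : n ≠ 0) :
    (x ^ ((1 : ℝ) / (2 * n))) ^ n = √x := by
  rw [← Real.rpow_mul_natCast hx, Real.sqrt_eq_rpow]
  field_simp

theorem star_score_tsirelson_bound (n : ℕ) (hn : 0 < n)
    (τ : Fin n → Fin 2 → ℝ)
    (h1 : ∀ i, τ i 0 ≤ 1) (h2 : ∀ i, τ i 1 ≤ τ i 0) (h3 : ∀ i, 0 ≤ τ i 1) :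
    ∏ i, ((τ i 0) ^ 2 + (τ i 1) ^ 2) ^ ((1 : ℝ) / (2 * n)) ≤ Real.sqrt 2 ∧
      (∏ i, ((τ i 0) ^ 2 + (τ i 1) ^ 2) ^ ((1 : ℝ) / (2 * n)) = Real.sqrt 2 ↔
        ∀ i, τ i 0 = 1 ∧ τ i 1 = 1) := by
  set c : ℝ := 1 / (2 * n)
  have hc : 0 < c := by positivity
  have hnonneg : ∀ i ∈ univ, 0 ≤ ((τ i 0) ^ 2 + (τ i 1) ^ 2) ^ c := fun i _ => by positivity
  have hle : ∀ i ∈ univ, ((τ i 0) ^ 2 + (τ i 1) ^ 2) ^ c ≤ (2 : ℝ) ^ c := fun i _ =>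
    Real.rpow_le_rpow (by positivity) (sq_add_sq_le_two (h1 i) (h2 i) (h3 i)) hc.le
  have hbound : ((2 : ℝ) ^ c) ^ #(univ : Finset (Fin n)) = √2 := by
    rw [card_univ, Fintype.card_fin, Real.rpow_one_div_two_mul_pow zero_le_two hn.ne']
  rw [← hbound, prod_eq_pow_card_iff_of_le hnonneg hle]
  refine ⟨(prod_le_prod hnonneg hle).trans_eq (prod_const _), ?_⟩
  simp only [mem_univ, true_implies]
  refine forall_congr' fun i => ?_
  rw [Real.rpow_left_inj (by positivity) zero_le_two hc.ne',
    sq_add_sq_eq_two_iff (h1 i) (h2 i) (h3 i)]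
end

section
/- Let Â_x = (τ_0 σ_z + τ_1(−1)^x σ_x)/√(τ_0² + τ_1²) and B̂_y = (1−y)σ_z + y·σ_x, and let ρ have diagonal correlation matrix with Tr[(σ_z⊗σ_z)ρ] = τ_0, Tr[(σ_x⊗σ_x)ρ] = τ_1 and vanishing cross terms. Then Tr[((Â_0 + (−1)^y Â_1) ⊗ B̂_y) ρ] = (2/√(τ_0² + τ_1²))·(τ_0²(1−y) + τ_1² y) for y ∈ {0,1}, and summing over y yields the CHSH score 2√(τ_0² + τ_1²). -/
open Matrix Kronecker

noncomputable def σx : Matrix (Fin 2) (Fin 2) ℂ := !![0, 1; 1, 0]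
noncomputable def σz : Matrix (Fin 2) (Fin 2) ℂ := !![1, 0; 0, -1]

/-- Alternative optimal CHSH observables of Eq. (9): `Â x = (τ₀ σz + τ₁ (-1)^x σx)/√(τ₀²+τ₁²)`. -/
noncomputable def Ahat (τ₀ τ₁ : ℝ) (x : Fin 2) : Matrix (Fin 2) (Fin 2) ℂ :=
  ((τ₀ / Real.sqrt (τ₀ ^ 2 + τ₁ ^ 2) : ℝ) : ℂ) • σz +
    ((τ₁ * (-1 : ℝ) ^ (x : ℕ) / Real.sqrt (τ₀ ^ 2 + τ₁ ^ 2) : ℝ) : ℂ) • σx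

/-- `B̂ y = (1-y)σz + y σx`. -/
noncomputable def Bhat (y : Fin 2) : Matrix (Fin 2) (Fin 2) ℂ :=
  ((1 - (y : ℕ) : ℝ) : ℂ) • σz + (((y : ℕ) : ℝ) : ℂ) • σx

/-! Correlators `Tr[(A ⊗ B) ρ]` are bilinear in `A` and `B`, so for a state whose correlation
matrix in the `σz, σx` basis is `diag(τ₀, τ₁)` only the `zz` and `xx` terms survive. For `y = 0`
the combination `Â₀ + Â₁` is a multiple of `σz`, and for `y = 1` the combination `Â₀ - Â₁` is a
multiple of `σx`, giving the correlators `2τ₀²/√(τ₀²+τ₁²)` and `2τ₁²/√(τ₀²+τ₁²)`, whose sum is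
`2√(τ₀²+τ₁²)`. -/

theorem Matrix.trace_kronecker_smul_add_smul_mul {α m n : Type*} [CommRing α]
    [Fintype m] [Fintype n] (P Q : Matrix m m α) (R S : Matrix n n α)
    (ρ : Matrix (m × n) (m × n) α) (a b c d : α) :
    (((a • P + b • Q) ⊗ₖ (c • R + d • S)) * ρ).trace =
      a * c * ((P ⊗ₖ R) * ρ).trace + a * d * ((P ⊗ₖ S) * ρ).trace +
        b * c * ((Q ⊗ₖ R) * ρ).trace + b * d * ((Q ⊗ₖ S) * ρ).trace := by
  simp only [add_kronecker, kronecker_add, smul_kronecker, kronecker_smul,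
    Matrix.add_mul, Matrix.smul_mul, trace_add, trace_smul, smul_eq_mul]
  ring

theorem trace_pauli_kronecker_mul_of_diagonal_correlations {τ₀ τ₁ : ℝ}
    {ρ : Matrix (Fin 2 × Fin 2) (Fin 2 × Fin 2) ℂ}
    (hzz : ((σz ⊗ₖ σz) * ρ).trace = τ₀) (hxx : ((σx ⊗ₖ σx) * ρ).trace = τ₁)
    (hzx : ((σz ⊗ₖ σx) * ρ).trace = 0) (hxz : ((σx ⊗ₖ σz) * ρ).trace = 0) (a b c d : ℂ) :
    (((a • σz + b • σx) ⊗ₖ (c • σz + d • σx)) * ρ).trace = a * c * τ₀ + b * d * τ₁ := by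
  rw [trace_kronecker_smul_add_smul_mul, hzz, hxx, hzx, hxz]
  ring

theorem Ahat_zero_add_smul_Ahat_one (τ₀ τ₁ : ℝ) (c : ℂ) :
    Ahat τ₀ τ₁ 0 + c • Ahat τ₀ τ₁ 1 =
      ((1 + c) * τ₀ / Real.sqrt (τ₀ ^ 2 + τ₁ ^ 2)) • σz +
        ((1 - c) * τ₁ / Real.sqrt (τ₀ ^ 2 + τ₁ ^ 2)) • σx := by
  simp only [Ahat, Fin.val_zero, Fin.val_one, pow_zero, pow_one, smul_add, smul_smul]
  push_cast
  module

theorem alternative_optimal_chsh_observables_general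
    (τ₀ τ₁ : ℝ)
    (ρ : Matrix (Fin 2 × Fin 2) (Fin 2 × Fin 2) ℂ)
    (hzz : ((σz ⊗ₖ σz) * ρ).trace = ((τ₀ : ℝ) : ℂ))
    (hxx : ((σx ⊗ₖ σx) * ρ).trace = ((τ₁ : ℝ) : ℂ))
    (hzx : ((σz ⊗ₖ σx) * ρ).trace = 0)
    (hxz : ((σx ⊗ₖ σz) * ρ).trace = 0) :
    (∀ y : Fin 2,
      (((Ahat τ₀ τ₁ 0 + ((-1 : ℂ) ^ (y : ℕ)) • Ahat τ₀ τ₁ 1) ⊗ₖ Bhat y) * ρ).trace =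
        ((2 / Real.sqrt (τ₀ ^ 2 + τ₁ ^ 2) *
            (τ₀ ^ 2 * (1 - (y : ℕ)) + τ₁ ^ 2 * (y : ℕ)) : ℝ) : ℂ)) ∧
    ∑ y : Fin 2,
        (((Ahat τ₀ τ₁ 0 + ((-1 : ℂ) ^ (y : ℕ)) • Ahat τ₀ τ₁ 1) ⊗ₖ Bhat y) * ρ).trace =
      ((2 * Real.sqrt (τ₀ ^ 2 + τ₁ ^ 2) : ℝ) : ℂ) := by
  have correlator (y : Fin 2) :
      (((Ahat τ₀ τ₁ 0 + ((-1 : ℂ) ^ (y : ℕ)) • Ahat τ₀ τ₁ 1) ⊗ₖ Bhat y) * ρ).trace =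
        ((2 / Real.sqrt (τ₀ ^ 2 + τ₁ ^ 2) *
            (τ₀ ^ 2 * (1 - (y : ℕ)) + τ₁ ^ 2 * (y : ℕ)) : ℝ) : ℂ) := by
    rw [Ahat_zero_add_smul_Ahat_one, Bhat,
      trace_pauli_kronecker_mul_of_diagonal_correlations hzz hxx hzx hxz]
    fin_cases y <;> push_cast <;> ring
  refine ⟨correlator, ?_⟩
  set s := Real.sqrt (τ₀ ^ 2 + τ₁ ^ 2)
  have hs_sq : τ₀ ^ 2 + τ₁ ^ 2 = s * s := (Real.mul_self_sqrt (by positivity)).symm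
  rw [Fin.sum_univ_two, correlator, correlator, ← Complex.ofReal_add]
  congr 1
  calc 2 / s * (τ₀ ^ 2 * (1 - ((0 : Fin 2) : ℕ)) + τ₁ ^ 2 * ((0 : Fin 2) : ℕ)) +
        2 / s * (τ₀ ^ 2 * (1 - ((1 : Fin 2) : ℕ)) + τ₁ ^ 2 * ((1 : Fin 2) : ℕ))
      = 2 * ((τ₀ ^ 2 + τ₁ ^ 2) / s) := by
        simp only [Fin.val_zero, Fin.val_one]
        push_cast
        ring
    _ = 2 * s := by rw [hs_sq, mul_self_div_self]

theorem alternative_optimal_chsh_observables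
    (τ₀ τ₁ : ℝ) (h1 : 0 ≤ τ₁) (h2 : τ₁ ≤ τ₀) (hpos : 0 < τ₀ ^ 2 + τ₁ ^ 2)
    (ρ : Matrix (Fin 2 × Fin 2) (Fin 2 × Fin 2) ℂ)
    (hzz : ((σz ⊗ₖ σz) * ρ).trace = ((τ₀ : ℝ) : ℂ))
    (hxx : ((σx ⊗ₖ σx) * ρ).trace = ((τ₁ : ℝ) : ℂ))
    (hzx : ((σz ⊗ₖ σx) * ρ).trace = 0)
    (hxz : ((σx ⊗ₖ σz) * ρ).trace = 0) :
    (∀ y : Fin 2,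
      (((Ahat τ₀ τ₁ 0 + ((-1 : ℂ) ^ (y : ℕ)) • Ahat τ₀ τ₁ 1) ⊗ₖ Bhat y) * ρ).trace =
        ((2 / Real.sqrt (τ₀ ^ 2 + τ₁ ^ 2) *
            (τ₀ ^ 2 * (1 - (y : ℕ)) + τ₁ ^ 2 * (y : ℕ)) : ℝ) : ℂ)) ∧
    ∑ y : Fin 2,
        (((Ahat τ₀ τ₁ 0 + ((-1 : ℂ) ^ (y : ℕ)) • Ahat τ₀ τ₁ 1) ⊗ₖ Bhat y) * ρ).trace =
      ((2 * Real.sqrt (τ₀ ^ 2 + τ₁ ^ 2) : ℝ) : ℂ) :=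
  alternative_optimal_chsh_observables_general τ₀ τ₁ ρ hzz hxx hzx hxz
end
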